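/- arXiv:2507.23029 — 3 statements merged into one kernel-verified Lean document; each statement's English description precedes it below -/
import Mathlib

section
/- Let K ≥ 1 and SF_p ≥ 1 be integers and let d[0],…,d[SF_p−1] ∈ {−1,+1} be a spreading sequence. If Σ_{l=0}^{SF_p−1} (−1)^l · d[l] = 0, then Σ_{l=0}^{SF_p−1} Σ_{n=0}^{K−1} s₁^{(l)}[n] · conj(s₀^{(l)}[n]) = 0; in particular the correlation coefficient ρ_DM(d) = (1/(K·SF_p)) · |Σ_{l<SF_p} Σ_{n<K} s₁^{(l)}[n] · conj(s₀^{(l)}[n])| equals zero, i.e. the DSSS-MSK symbols '1' and '0' spread by d are orthogonal. -/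
open Real Complex Finset

/-- The `l`-th chip (sample index `n = 0,…,K-1`) of the DSSS-MSK matched filter for the
symbol spread by the binary sequence `d`:
`s^{(l)}[n] = exp(i (π/2) Σ_{i<l} d i) · exp(i π d l n / (2K))`.
The filter for symbol '1' uses `d`, the one for symbol '0' uses `-d`. -/
noncomputable def dsssMskChip (d : ℕ → ℝ) (K l n : ℕ) : ℂ :=
  Complex.exp (Complex.I * (Real.pi / 2) * (∑ i ∈ Finset.range l, (d i : ℂ))) *
    Complex.exp (Complex.I * Real.pi * (d l : ℂ) * (n : ℂ) / (2 * (K : ℂ)))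

/-!
The conjugate of the '0' filter is the '1' filter, so each correlation term is `s₁^{(l)}[n]²`.
Squaring turns the phase `(π/2) Σ_{i<l} d i` into a sum of `l` terms `±π`, i.e. the sign
`(-1)^l`, and the in-chip phase into `± π n / K`, i.e. `cos (π n / K) ± i sin (π n / K)`.
Summing over `l`, the cosine part carries `Σ (-1)^l`, which vanishes because the hypothesis
forces `SF_p` to be even, and the sine part carries `Σ (-1)^l d l = 0`.
-/

theorem Finset.even_card_of_sum_eq_zero {ι : Type*} {s : Finset ι} {x : ι → ℝ}
    (hx : ∀ i ∈ s, x i = 1 ∨ x i = -1) (hsum : ∑ i ∈ s, x i = 0) : Even #s := by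
  have hsplit : ∀ i ∈ s, x i = 1 - 2 * (if x i = -1 then 1 else 0) := by
    intro i hi
    rcases hx i hi with h | h <;> norm_num [h]
  rw [sum_congr rfl hsplit, sum_sub_distrib, ← mul_sum, sum_boole, sum_const, nsmul_one,
    sub_eq_zero] at hsum
  exact ⟨#(s.filter fun i => x i = -1), by exact_mod_cast hsum.trans (two_mul _)⟩

theorem Complex.exp_mul_pi_mul_I_of_eq_one_or_neg_one {x : ℝ} (hx : x = 1 ∨ x = -1) :
    exp (x * π * I) = -1 := by
  rcases hx with rfl | rfl
  · simp
  · simp [exp_neg]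

theorem Complex.exp_sum_mul_pi_mul_I {ι : Type*} {s : Finset ι} {x : ι → ℝ}
    (hx : ∀ i ∈ s, x i = 1 ∨ x i = -1) :
    exp ((∑ i ∈ s, (x i : ℂ)) * π * I) = (-1) ^ #s := by
  rw [sum_mul, sum_mul, exp_sum,
    prod_congr rfl fun i hi => exp_mul_pi_mul_I_of_eq_one_or_neg_one (hx i hi), prod_const]

theorem Complex.exp_mul_mul_I_of_eq_one_or_neg_one {x : ℝ} (hx : x = 1 ∨ x = -1) (θ : ℂ) :
    exp (x * θ * I) = cos θ + x * sin θ * I := by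
  rcases hx with rfl | rfl
  · simp [exp_mul_I]
  · rw [show ((-1 : ℝ) : ℂ) * θ * I = -θ * I by push_cast; ring, exp_mul_I, Complex.cos_neg,
      Complex.sin_neg]
    push_cast
    ring

theorem starRingEnd_dsssMskChip_neg (d : ℕ → ℝ) (K l n : ℕ) :
    starRingEnd ℂ (dsssMskChip (fun i => -d i) K l n) = dsssMskChip d K l n := by
  simp only [dsssMskChip, map_mul, ← exp_conj, map_div₀, ofReal_neg, sum_neg_distrib, map_neg,
    map_sum, conj_I, conj_ofReal, conj_natCast, map_ofNat]
  congr 2 <;> ring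

theorem dsssMskChip_sq (d : ℕ → ℝ) (K l n : ℕ) :
    dsssMskChip d K l n ^ 2 =
      exp ((∑ i ∈ range l, (d i : ℂ)) * π * I) * exp (d l * (π * n / K) * I) := by
  rw [dsssMskChip, mul_pow, ← Complex.exp_nat_mul, ← Complex.exp_nat_mul]
  congr 2
  · push_cast
    ring
  · rw [Nat.cast_ofNat, ← mul_div_assoc, mul_div_mul_left _ _ two_ne_zero]
    ring

theorem dsssMskChip_sq_of_eq_one_or_neg_one {d : ℕ → ℝ} {l : ℕ}
    (hd : ∀ i ≤ l, d i = 1 ∨ d i = -1) (K n : ℕ) :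
    dsssMskChip d K l n ^ 2 = (-1) ^ l * (Complex.cos (π * n / K) + d l * Complex.sin (π * n / K) * I) := by
  rw [dsssMskChip_sq, exp_sum_mul_pi_mul_I fun i hi => hd i (mem_range.mp hi).le, card_range,
    exp_mul_mul_I_of_eq_one_or_neg_one (hd l le_rfl)]

theorem prop2_orthogonal_spreading_general (K SFp : ℕ)
    (d : ℕ → ℝ) (hd : ∀ l < SFp, d l = 1 ∨ d l = -1)
    (horth : ∑ l ∈ Finset.range SFp, (-1 : ℝ) ^ l * d l = 0) :
    (∑ l ∈ Finset.range SFp, ∑ n ∈ Finset.range K,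
        dsssMskChip d K l n * (starRingEnd ℂ) (dsssMskChip (fun i => -d i) K l n)) = 0 ∧
    (1 / ((K : ℝ) * (SFp : ℝ))) *
      ‖∑ l ∈ Finset.range SFp, ∑ n ∈ Finset.range K,
        dsssMskChip d K l n * (starRingEnd ℂ) (dsssMskChip (fun i => -d i) K l n)‖ = 0 := by
  have heven : Even SFp := by
    simpa using even_card_of_sum_eq_zero (s := range SFp) (fun l hl => by
      rcases hd l (mem_range.mp hl) with h | h <;>
        rcases neg_one_pow_eq_or ℝ l with h' | h' <;> simp [h, h']) horth
  have halt : ∑ l ∈ range SFp, (-1 : ℂ) ^ l = 0 := by rw [neg_one_geom_sum, if_pos heven]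
  have horthC : ∑ l ∈ range SFp, (-1 : ℂ) ^ l * d l = 0 := by exact_mod_cast horth
  have hcorr : (∑ l ∈ range SFp, ∑ n ∈ range K,
      dsssMskChip d K l n * starRingEnd ℂ (dsssMskChip (fun i => -d i) K l n)) = 0 := by
    calc _ = ∑ n ∈ range K, ∑ l ∈ range SFp,
            (-1) ^ l * (Complex.cos (π * n / K) + d l * Complex.sin (π * n / K) * I) := by
          rw [sum_comm]
          refine sum_congr rfl fun n _ => sum_congr rfl fun l hl => ?_
          rw [starRingEnd_dsssMskChip_neg, ← sq, dsssMskChip_sq_of_eq_one_or_neg_one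
            fun i hi => hd i (hi.trans_lt (mem_range.mp hl))]
      _ = ∑ n ∈ range K, ((∑ l ∈ range SFp, (-1) ^ l) * Complex.cos (π * n / K) +
            (∑ l ∈ range SFp, (-1) ^ l * (d l : ℂ)) * Complex.sin (π * n / K) * I) := by
          refine sum_congr rfl fun n _ => ?_
          simp only [mul_add, sum_add_distrib, sum_mul]
          congr 1
          exact sum_congr rfl fun l _ => by ring
      _ = 0 := by simp [halt, horthC]
  exact ⟨hcorr, by rw [hcorr, norm_zero, mul_zero]⟩

/-- Proposition 2: if the spreading sequence `d` with entries in `{-1,+1}` satisfies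
`Σ_{l<SF_p} (-1)^l d l = 0`, then the DSSS-MSK symbols '1' and '0' are orthogonal:
the correlation sum vanishes and hence the correlation coefficient
`ρ_DM(d) = 1/(K·SF_p) |Σ_{l<SF_p} Σ_{n<K} s₁^{(l)}[n] conj(s₀^{(l)}[n])|` is zero. -/
theorem prop2_orthogonal_spreading (K SFp : ℕ) (hK : 1 ≤ K) (hSFp : 1 ≤ SFp)
    (d : ℕ → ℝ) (hd : ∀ l < SFp, d l = 1 ∨ d l = -1)
    (horth : ∑ l ∈ Finset.range SFp, (-1 : ℝ) ^ l * d l = 0) :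
    (∑ l ∈ Finset.range SFp, ∑ n ∈ Finset.range K,
        dsssMskChip d K l n * (starRingEnd ℂ) (dsssMskChip (fun i => -d i) K l n)) = 0 ∧
    (1 / ((K : ℝ) * (SFp : ℝ))) *
      ‖∑ l ∈ Finset.range SFp, ∑ n ∈ Finset.range K,
        dsssMskChip d K l n * (starRingEnd ℂ) (dsssMskChip (fun i => -d i) K l n)‖ = 0 :=
  prop2_orthogonal_spreading_general K SFp d hd horth
end

section
/- Let N ≥ 1 and K ≥ 1 be integers with M := 2NK ≥ 2, let h > 0 and σ > 0, and set S₁ = Σ_{n=0}^{M−1} n and S₂ = Σ_{n=0}^{M−1} n². Define the 3×3 real symmetric matrix I by I₁₁ = 2M/σ², I₂₂ = 2h²M/σ², I₂₃ = I₃₂ = 4π·h²·S₁/σ², I₃₃ = 8π²·h²·S₂/σ², and all other entries zero. Then I is invertible and the (3,3) entry of its inverse equals 3·σ² / ( 4π²·N·K·(4N²K² − 1)·h² ), i.e. (I⁻¹)₃₃ = 3 / ( 4π²·N·K·(4N²K² − 1)·SNR_h ) where SNR_h = h²/σ². -/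
open Real Finset Matrix

lemma sum_range_cast_id (M : ℕ) :
    (∑ n ∈ Finset.range M, (n : ℝ)) = M * (M - 1) / 2 := by
  induction M with
  | zero => simp
  | succ m ih => rw [Finset.sum_range_succ, ih]; push_cast; ring

lemma sum_range_cast_sq (M : ℕ) :
    (∑ n ∈ Finset.range M, (n : ℝ) ^ 2) = M * (M - 1) * (2 * M - 1) / 6 := by
  induction M with
  | zero => simp
  | succ m ih => rw [Finset.sum_range_succ, ih]; push_cast; ring

lemma det_block (a b c d : ℝ) :
    Matrix.det !![a,0,0;0,b,c;0,c,d] = a * (b * d - c * c) := by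
  rw [Matrix.det_fin_three]; simp; ring

lemma inv22_block (a b c d : ℝ) :
    (!![a,0,0;0,b,c;0,c,d]⁻¹) 2 2 = Ring.inverse (a * (b * d - c * c)) * (a * b) := by
  rw [Matrix.inv_def, det_block, Matrix.adjugate_fin_three]
  simp [Matrix.smul_apply]

/-- Cramer–Rao lower bound for CFO estimation: with `M = 2NK ≥ 2`,
`S₁ = Σ_{n<M} n`, `S₂ = Σ_{n<M} n²`, the Fisher information matrix
`I = [[2M/σ², 0, 0], [0, 2h²M/σ², 4πh²S₁/σ²], [0, 4πh²S₁/σ², 8π²h²S₂/σ²]]`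
is invertible and the `(3,3)` entry of its inverse equals
`3σ²/(4π² N K (4N²K² - 1) h²) = 3/(4π² N K (4N²K² - 1) SNR_h)` with `SNR_h = h²/σ²`. -/
theorem crlb_cfo_estimation (N K : ℕ) (hN : 1 ≤ N) (hK : 1 ≤ K)
    (hM : 2 ≤ 2 * N * K) (h σ : ℝ) (hh : 0 < h) (hσ : 0 < σ) :
    IsUnit (Matrix.det
      (!![2 * ((2 * N * K : ℕ) : ℝ) / σ ^ 2, 0, 0;
          0, 2 * h ^ 2 * ((2 * N * K : ℕ) : ℝ) / σ ^ 2,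
            4 * Real.pi * h ^ 2 * (∑ n ∈ Finset.range (2 * N * K), (n : ℝ)) / σ ^ 2;
          0, 4 * Real.pi * h ^ 2 * (∑ n ∈ Finset.range (2 * N * K), (n : ℝ)) / σ ^ 2,
            8 * Real.pi ^ 2 * h ^ 2 * (∑ n ∈ Finset.range (2 * N * K), (n : ℝ) ^ 2) / σ ^ 2])) ∧
    (!![2 * ((2 * N * K : ℕ) : ℝ) / σ ^ 2, 0, 0;
        0, 2 * h ^ 2 * ((2 * N * K : ℕ) : ℝ) / σ ^ 2,
          4 * Real.pi * h ^ 2 * (∑ n ∈ Finset.range (2 * N * K), (n : ℝ)) / σ ^ 2;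
        0, 4 * Real.pi * h ^ 2 * (∑ n ∈ Finset.range (2 * N * K), (n : ℝ)) / σ ^ 2,
          8 * Real.pi ^ 2 * h ^ 2 * (∑ n ∈ Finset.range (2 * N * K), (n : ℝ) ^ 2) / σ ^ 2]⁻¹) 2 2
      = 3 * σ ^ 2 / (4 * Real.pi ^ 2 * N * K * (4 * (N : ℝ) ^ 2 * (K : ℝ) ^ 2 - 1) * h ^ 2) ∧
    (!![2 * ((2 * N * K : ℕ) : ℝ) / σ ^ 2, 0, 0;
        0, 2 * h ^ 2 * ((2 * N * K : ℕ) : ℝ) / σ ^ 2,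
          4 * Real.pi * h ^ 2 * (∑ n ∈ Finset.range (2 * N * K), (n : ℝ)) / σ ^ 2;
        0, 4 * Real.pi * h ^ 2 * (∑ n ∈ Finset.range (2 * N * K), (n : ℝ)) / σ ^ 2,
          8 * Real.pi ^ 2 * h ^ 2 * (∑ n ∈ Finset.range (2 * N * K), (n : ℝ) ^ 2) / σ ^ 2]⁻¹) 2 2
      = 3 / (4 * Real.pi ^ 2 * N * K * (4 * (N : ℝ) ^ 2 * (K : ℝ) ^ 2 - 1) * (h ^ 2 / σ ^ 2)) := by
  have hπ : Real.pi ≠ 0 := Real.pi_ne_zero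
  have hh' : h ≠ 0 := ne_of_gt hh
  have hσ' : σ ≠ 0 := ne_of_gt hσ
  have hN' : (1 : ℝ) ≤ (N : ℝ) := by exact_mod_cast hN
  have hK' : (1 : ℝ) ≤ (K : ℝ) := by exact_mod_cast hK
  have hNK : (1 : ℝ) ≤ (N : ℝ) * K := le_trans hN' (le_mul_of_one_le_right (by linarith) hK')
  have hN0 : (N : ℝ) ≠ 0 := by positivity
  have hK0 : (K : ℝ) ≠ 0 := by positivity
  have hfac : (0 : ℝ) < 4 * (N : ℝ) ^ 2 * (K : ℝ) ^ 2 - 1 := by nlinarith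
  have hm : ((2 * N * K : ℕ) : ℝ) = 2 * N * K := by push_cast; ring
  have hS1 := sum_range_cast_id (2 * N * K)
  have hS2 := sum_range_cast_sq (2 * N * K)
  have hdetval :
      (2 * ((2 * N * K : ℕ) : ℝ) / σ ^ 2) *
        ((2 * h ^ 2 * ((2 * N * K : ℕ) : ℝ) / σ ^ 2) *
          (8 * Real.pi ^ 2 * h ^ 2 * (∑ n ∈ Finset.range (2 * N * K), (n : ℝ) ^ 2) / σ ^ 2) -
        (4 * Real.pi * h ^ 2 * (∑ n ∈ Finset.range (2 * N * K), (n : ℝ)) / σ ^ 2) *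
        (4 * Real.pi * h ^ 2 * (∑ n ∈ Finset.range (2 * N * K), (n : ℝ)) / σ ^ 2))
      = 64 / 3 * Real.pi ^ 2 * h ^ 4 / σ ^ 6 *
          ((N : ℝ) ^ 3 * K ^ 3 * (4 * (N : ℝ) ^ 2 * (K : ℝ) ^ 2 - 1)) := by
    rw [hS1, hS2, hm]; field_simp; ring
  have hdet0 : (64 / 3 * Real.pi ^ 2 * h ^ 4 / σ ^ 6 *
      ((N : ℝ) ^ 3 * K ^ 3 * (4 * (N : ℝ) ^ 2 * (K : ℝ) ^ 2 - 1))) ≠ 0 := by positivity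
  have key : (!![2 * ((2 * N * K : ℕ) : ℝ) / σ ^ 2, 0, 0;
        0, 2 * h ^ 2 * ((2 * N * K : ℕ) : ℝ) / σ ^ 2,
          4 * Real.pi * h ^ 2 * (∑ n ∈ Finset.range (2 * N * K), (n : ℝ)) / σ ^ 2;
        0, 4 * Real.pi * h ^ 2 * (∑ n ∈ Finset.range (2 * N * K), (n : ℝ)) / σ ^ 2,
          8 * Real.pi ^ 2 * h ^ 2 * (∑ n ∈ Finset.range (2 * N * K), (n : ℝ) ^ 2) / σ ^ 2]⁻¹) 2 2
      = 3 * σ ^ 2 / (4 * Real.pi ^ 2 * N * K * (4 * (N : ℝ) ^ 2 * (K : ℝ) ^ 2 - 1) * h ^ 2) := by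
    rw [inv22_block, hdetval, Ring.inverse_eq_inv, hm]
    have hfac' := hfac.ne'
    field_simp
    ring
  refine ⟨?_, key, ?_⟩
  · rw [det_block, hdetval]
    exact isUnit_iff_ne_zero.2 (by positivity)
  · rw [key]
    have hfac' := hfac.ne'
    field_simp
end

section
/- Let L ≥ 1 be an integer and let x be a real number with 0 < |x| ≤ 1/(4L). Then (1/L) · | sin(π·L·x) / sin(π·x) | ≥ 2·sqrt(2)/π, and in particular this normalized correlation magnitude exceeds 0.9. -/
/-!
By concavity of `sin` on `[0, π]`, `sin` lies above its chord through `0` and `π/4`, so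
`sin (L t) ≥ (2√2/π) L t` whenever `L t ≤ π/4`, while `sin t ≤ t`. Hence the Dirichlet-kernel ratio
`sin (L t) / (L sin t)` with `t = π |x|` is at least `2√2/π ≈ 0.9003`.
-/

open Real

namespace Real

theorem mul_sin_le_sin_mul {a s : ℝ} (ha₀ : 0 ≤ a) (ha : a ≤ π) (hs₀ : 0 ≤ s) (hs₁ : s ≤ 1) :
    s * sin a ≤ sin (s * a) := by
  simpa using strictConcaveOn_sin_Icc.concaveOn.2 ⟨le_rfl, pi_pos.le⟩ ⟨ha₀, ha⟩
    (sub_nonneg.2 hs₁) hs₀ (by ring)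

theorem sin_div_mul_le_sin {a θ : ℝ} (ha : a ≤ π) (hθ₀ : 0 ≤ θ) (hθa : θ ≤ a) :
    sin a / a * θ ≤ sin θ := by
  rcases hθ₀.eq_or_lt with rfl | hθ
  · simp
  have ha₀ : 0 < a := hθ.trans_le hθa
  have hchord := mul_sin_le_sin_mul ha₀.le ha (div_nonneg hθ₀ ha₀.le)
    ((div_le_one ha₀).2 hθa)
  rw [div_mul_cancel₀ θ ha₀.ne'] at hchord
  linarith [show sin a / a * θ = θ / a * sin a by ring]

theorem sin_div_mul_le_sin_mul_div_sin {a c t : ℝ} (ha : a < π) (ht : 0 < t) (hc : 1 ≤ c)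
    (hct : c * t ≤ a) : sin a / a * c ≤ sin (c * t) / sin t := by
  have hta : t ≤ a := by nlinarith
  have hsin_t : 0 < sin t := sin_pos_of_pos_of_lt_pi ht (hta.trans_lt ha)
  have hslope : 0 ≤ sin a / a :=
    div_nonneg (sin_nonneg_of_nonneg_of_le_pi (ht.le.trans hta) ha.le) (ht.le.trans hta)
  rw [le_div_iff₀ hsin_t]
  calc sin a / a * c * sin t ≤ sin a / a * (c * t) := by
        rw [mul_assoc]; gcongr; exact sin_le ht.le
    _ ≤ sin (c * t) := sin_div_mul_le_sin ha.le (by positivity) hct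

theorem sin_mul_abs_div_sin_abs (c x : ℝ) : sin (c * |x|) / sin |x| = sin (c * x) / sin x := by
  rcases abs_choice x with h | h <;> simp [h, neg_div_neg_eq]

theorem sin_pi_div_four_div_pi_div_four : sin (π / 4) / (π / 4) = 2 * √2 / π := by
  rw [sin_pi_div_four]
  field_simp
  ring

theorem nine_tenths_lt_two_mul_sqrt_two_div_pi : (0.9 : ℝ) < 2 * √2 / π := by
  have hsqrt : (1.414 : ℝ) < √2 := lt_sqrt_of_sq_lt (by norm_num)
  rw [lt_div_iff₀ pi_pos]
  linarith [pi_lt_d4]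

end Real

/-- Residual-CFO robustness of payload correlation: for a payload symbol of
`L ≥ 1` samples and a residual normalized CFO `x` with `0 < |x| ≤ 1/(4L)`, the
normalized correlation magnitude satisfies
`(1/L) |sin(πLx)/sin(πx)| ≥ 2√2/π`, which in particular exceeds `0.9`. -/
theorem residual_cfo_correlation_bound (L : ℕ) (hL : 1 ≤ L) (x : ℝ)
    (hx0 : 0 < |x|) (hx : |x| ≤ 1 / (4 * L)) :
    (1 / (L : ℝ)) * |Real.sin (Real.pi * L * x) / Real.sin (Real.pi * x)| ≥
        2 * Real.sqrt 2 / Real.pi ∧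
    (1 / (L : ℝ)) * |Real.sin (Real.pi * L * x) / Real.sin (Real.pi * x)| > 0.9 := by
  have hL₁ : (1 : ℝ) ≤ L := by exact_mod_cast hL
  have hL₀ : (0 : ℝ) < L := by linarith
  have ht : |π * x| = π * |x| := by rw [abs_mul, abs_of_pos pi_pos]
  have hLx : L * |x| ≤ 1 / 4 := by
    rw [le_div_iff₀ (by positivity)] at hx
    linarith
  have hLt : L * |π * x| ≤ π / 4 :=
    calc L * |π * x| = π * (L * |x|) := by rw [ht]; ring
      _ ≤ π / 4 := by nlinarith [pi_pos]
  have hratio : 2 * √2 / π * L ≤ sin (L * |π * x|) / sin |π * x| := by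
    rw [← sin_pi_div_four_div_pi_div_four]
    exact sin_div_mul_le_sin_mul_div_sin (by linarith [pi_pos])
      (by rw [ht]; exact mul_pos pi_pos hx0) hL₁ hLt
  have hbound : 2 * √2 / π ≤ 1 / (L : ℝ) * |sin (π * L * x) / sin (π * x)| := by
    rw [show π * L * x = L * (π * x) by ring, ← sin_mul_abs_div_sin_abs,
      abs_of_nonneg ((by positivity : (0 : ℝ) ≤ 2 * √2 / π * L).trans hratio), one_div,
      le_inv_mul_iff₀ hL₀]
    linarith
  exact ⟨hbound, nine_tenths_lt_two_mul_sqrt_two_div_pi.trans_le hbound⟩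
end
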